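/- arXiv:math/0303095 — 11 statements merged into one kernel-verified Lean document; each statement's English description precedes it below -/
import Mathlib

section
/- Let G be a real symmetric 2×2 matrix with det G < 0, so that g(u,v) = uᵀGv is a Lorentzian inner product on ℝ², and let A be a real 2×2 matrix with AᵀG = GA and det A = 1. If tr A > 2, then there exists exactly one real 2×2 matrix a with aᵀG = Ga and exp(a) = A; moreover this a satisfies tr a = 0 and det a < 0 (so the unique geodesic t ↦ g(exp(ta)·,·) joining g and g(A·,·) in the space of Lorentzian inner products with fixed volume form is timelike). -/
open Matrix NormedSpace

/-!
Write `tr A = 2 cosh γ` with `γ > 0`. Then `N = (A - cosh γ) / sinh γ` is a trace-free involution,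
`g`-symmetric because it is a polynomial in `A`, and `A = cosh γ + sinh γ N`; so `a = γ N` is a
`g`-symmetric logarithm of `A` with `tr a = 0` and `det a = -γ² < 0`. Conversely, a real
logarithm `b` of `A` commutes with `A`, hence with `N`, and the polarized Cayley–Hamilton identity
shows that everything commuting with a trace-free involution lies in `span {1, N}`. Writing
`b = α + β N`, we get `exp b = e^α (cosh β + sinh β N)`, and comparing coefficients with `A`
forces `α = 0`, `β = γ`.
-/

theorem IsIdempotentElem.smul_add_smul_one_sub_pow {R 𝔸 : Type*} [CommSemiring R] [Ring 𝔸]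
    [Algebra R 𝔸] {P : 𝔸} (hP : IsIdempotentElem P) (x y : R) (n : ℕ) :
    (x • P + y • (1 - P)) ^ n = x ^ n • P + y ^ n • (1 - P) := by
  induction n with
  | zero => simp
  | succ n ih =>
    have hPQ : P * (1 - P) = 0 := by rw [mul_sub, mul_one, hP.eq, sub_self]
    have hQP : (1 - P) * P = 0 := by rw [sub_mul, one_mul, hP.eq, sub_self]
    rw [pow_succ, ih]
    simp only [add_mul, mul_add, smul_mul_smul_comm, hP.eq, hP.one_sub.eq, hPQ, hQP, smul_zero,
      add_zero, zero_add, pow_succ]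

section TopologicalAlgebra

variable {𝔸 : Type*} [Ring 𝔸] [Algebra ℝ 𝔸] [TopologicalSpace 𝔸] [IsTopologicalRing 𝔸]
  [ContinuousSMul ℝ 𝔸] [T2Space 𝔸]

theorem IsIdempotentElem.exp_smul_add_smul_one_sub {P : 𝔸} (hP : IsIdempotentElem P) (x y : ℝ) :
    exp (x • P + y • (1 - P)) = Real.exp x • P + Real.exp y • (1 - P) := by
  have hx := (exp_series_hasSum_exp' (𝕂 := ℝ) x).smul_const P
  have hy := (exp_series_hasSum_exp' (𝕂 := ℝ) y).smul_const (1 - P)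
  simp only [smul_eq_mul, ← Real.exp_eq_exp_ℝ] at hx hy
  rw [exp_eq_tsum ℝ]
  simp only [hP.smul_add_smul_one_sub_pow, smul_add, smul_smul]
  exact (hx.add hy).tsum_eq

theorem exp_smul_one_add_smul_of_mul_self_eq_one {N : 𝔸} (hN : N * N = 1) (α β : ℝ) :
    exp (α • (1 : 𝔸) + β • N) =
      (Real.exp α * Real.cosh β) • (1 : 𝔸) + (Real.exp α * Real.sinh β) • N := by
  set P : 𝔸 := (2⁻¹ : ℝ) • (1 + N)
  have hP : IsIdempotentElem P := by
    simp only [IsIdempotentElem, P, smul_mul_smul_comm, add_mul, mul_add, one_mul, mul_one, hN]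
    module
  have hsplit : α • (1 : 𝔸) + β • N = (α + β) • P + (α - β) • (1 - P) := by
    simp only [P]; module
  rw [hsplit, hP.exp_smul_add_smul_one_sub, Real.cosh_eq, Real.sinh_eq, sub_eq_add_neg α,
    Real.exp_add, Real.exp_add]
  simp only [P]
  module

end TopologicalAlgebra

theorem Real.eq_zero_and_eq_of_exp_mul_cosh_of_exp_mul_sinh {α β γ : ℝ}
    (hc : exp α * cosh β = cosh γ) (hs : exp α * sinh β = sinh γ) : α = 0 ∧ β = γ := by
  have hadd : α + β = γ := exp_injective <| by
    rw [exp_add, ← cosh_add_sinh β, ← cosh_add_sinh γ, ← hc, ← hs]; ring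
  have hsub : α + -β = -γ := exp_injective <| by
    rw [exp_add, ← cosh_sub_sinh β, ← cosh_sub_sinh γ, ← hc, ← hs]; ring
  constructor <;> linarith

namespace Matrix

variable {K : Type*}

theorem mul_add_mul_fin_two [CommRing K] (X Y : Matrix (Fin 2) (Fin 2) K) :
    X * Y + Y * X = X.trace • Y + Y.trace • X + ((X * Y).trace - X.trace * Y.trace) • 1 := by
  ext i j
  fin_cases i <;> fin_cases j <;> simp [mul_apply, trace_fin_two, Fin.sum_univ_two] <;> ring

theorem mul_self_fin_two [CommRing K] (X : Matrix (Fin 2) (Fin 2) K) :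
    X * X = X.trace • X - X.det • 1 := by
  ext i j
  fin_cases i <;> fin_cases j <;>
    simp [mul_apply, trace_fin_two, det_fin_two, Fin.sum_univ_two] <;> ring

section TraceFreeInvolution

variable [Field K] {N : Matrix (Fin 2) (Fin 2) K} (hN : N * N = 1) (htr : N.trace = 0)
include hN htr

theorem det_eq_neg_one_of_mul_self_eq_one_of_trace_eq_zero : N.det = -1 := by
  have h := congrFun (congrFun (mul_self_fin_two N) 0) 0
  simp only [hN, htr, one_apply_eq, sub_apply, smul_apply, zero_smul, zero_apply, smul_eq_mul,
    mul_one, zero_sub] at h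
  linear_combination h

theorem eq_smul_one_add_smul_of_commute [NeZero (2 : K)] {X : Matrix (Fin 2) (Fin 2) K}
    (hX : Commute X N) : X = (X.trace / 2) • 1 + ((X * N).trace / 2) • N := by
  have h2 : (2 : K) • (X * N) = X.trace • N + (X * N).trace • 1 := by
    rw [two_smul]; nth_rewrite 2 [hX.eq]; simpa [htr] using mul_add_mul_fin_two X N
  calc X = (2 : K)⁻¹ • ((2 : K) • (X * N)) * N := by
        rw [smul_smul, inv_mul_cancel₀ two_ne_zero, one_smul, mul_assoc, hN, mul_one]
    _ = _ := by
        rw [h2]; simp only [smul_add, add_mul, smul_mul_assoc, one_mul, hN, smul_smul]; module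

theorem smul_one_add_smul_inj [NeZero (2 : K)] {u v u' v' : K}
    (h : u • 1 + v • N = u' • 1 + v' • N) : u = u' ∧ v = v' := by
  have ht : 2 * u = 2 * u' := by simpa [htr, mul_comm] using congrArg trace h
  have htN : 2 * v = 2 * v' := by
    simpa [htr, hN, add_mul, mul_comm] using congrArg (fun X => trace (X * N)) h
  exact ⟨mul_left_cancel₀ two_ne_zero ht, mul_left_cancel₀ two_ne_zero htN⟩

end TraceFreeInvolution

theorem trace_inv_smul_sub_smul_one [Field K] {A : Matrix (Fin 2) (Fin 2) K} {c : K}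
    (htr : A.trace = 2 * c) (s : K) : (s⁻¹ • (A - c • 1)).trace = 0 := by
  simp [trace_sub, htr, mul_comm]

theorem inv_smul_sub_smul_one_mul_self [Field K] {A : Matrix (Fin 2) (Fin 2) K} {c s : K}
    (hdet : A.det = 1) (htr : A.trace = 2 * c) (hcs : c ^ 2 - s ^ 2 = 1) (hs : s ≠ 0) :
    (s⁻¹ • (A - c • 1)) * (s⁻¹ • (A - c • 1)) = 1 := by
  have hA := mul_self_fin_two A
  rw [hdet, htr] at hA
  simp only [sub_mul, mul_sub, smul_mul_assoc, mul_smul_comm, one_mul, mul_one, hA, smul_smul]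
  match_scalars <;> field_simp
  · ring
  · linear_combination hcs

theorem exp_eq_cosh_smul_one_add_sinh_smul_iff {N : Matrix (Fin 2) (Fin 2) ℝ} (hN : N * N = 1)
    (htr : N.trace = 0) {γ : ℝ} (hγ : γ ≠ 0) (b : Matrix (Fin 2) (Fin 2) ℝ) :
    exp b = Real.cosh γ • 1 + Real.sinh γ • N ↔ b = γ • N := by
  constructor
  · intro hb
    have hbN : Commute b N := by
      have h := ((Commute.refl b).exp_right.sub_right ((Commute.one_right b).smul_right
        (Real.cosh γ))).smul_right (Real.sinh γ)⁻¹
      rwa [hb, add_sub_cancel_left, inv_smul_smul₀ (Real.sinh_ne_zero.2 hγ)] at h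
    have hdecomp := eq_smul_one_add_smul_of_commute hN htr hbN
    rw [hdecomp, exp_smul_one_add_smul_of_mul_self_eq_one hN] at hb
    obtain ⟨hc, hs⟩ := smul_one_add_smul_inj hN htr hb
    obtain ⟨hα, hβ⟩ := Real.eq_zero_and_eq_of_exp_mul_cosh_of_exp_mul_sinh hc hs
    rw [hdecomp, hα, hβ, zero_smul, zero_add]
  · rintro rfl
    simpa using exp_smul_one_add_smul_of_mul_self_eq_one hN 0 γ

end Matrix

theorem timelike_geodesic_unique_general (G A : Matrix (Fin 2) (Fin 2) ℝ)
    (hAsymm : Aᵀ * G = G * A) (hAdet : A.det = 1)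
    (htr : 2 < A.trace) :
    (∃! a : Matrix (Fin 2) (Fin 2) ℝ, aᵀ * G = G * a ∧ NormedSpace.exp a = A) ∧
      ∀ a : Matrix (Fin 2) (Fin 2) ℝ, aᵀ * G = G * a → NormedSpace.exp a = A →
        a.trace = 0 ∧ a.det < 0 := by
  obtain ⟨γ, hγ, hcosh⟩ : ∃ γ : ℝ, 0 < γ ∧ A.trace = 2 * Real.cosh γ :=
    ⟨Real.arcosh (A.trace / 2), Real.arcosh_pos (by linarith),
      by rw [Real.cosh_arcosh (by linarith)]; ring⟩
  have hsinh : Real.sinh γ ≠ 0 := (Real.sinh_pos_iff.2 hγ).ne'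
  set N := (Real.sinh γ)⁻¹ • (A - Real.cosh γ • 1)
  have hNN : N * N = 1 :=
    inv_smul_sub_smul_one_mul_self hAdet hcosh (by rw [Real.cosh_sq]; ring) hsinh
  have hNtr : N.trace = 0 := trace_inv_smul_sub_smul_one hcosh _
  have hA : A = Real.cosh γ • 1 + Real.sinh γ • N := by
    rw [smul_smul, mul_inv_cancel₀ hsinh, one_smul, add_sub_cancel]
  have hlog (b : Matrix (Fin 2) (Fin 2) ℝ) : exp b = A ↔ b = γ • N :=
    hA ▸ exp_eq_cosh_smul_one_add_sinh_smul_iff hNN hNtr hγ.ne' b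
  have hsymm : (γ • N)ᵀ * G = G * (γ • N) := by
    have hA' : A ∈ selfAdjointMatricesSubmodule G := (mem_selfAdjointMatricesSubmodule G _).2 hAsymm
    have h1 : (1 : Matrix (Fin 2) (Fin 2) ℝ) ∈ selfAdjointMatricesSubmodule G := by
      simp [Matrix.IsSelfAdjoint, Matrix.IsAdjointPair]
    refine (mem_selfAdjointMatricesSubmodule G _).1 ?_
    exact Submodule.smul_mem _ _ (Submodule.smul_mem _ _ (sub_mem hA' (Submodule.smul_mem _ _ h1)))
  refine ⟨⟨γ • N, ⟨hsymm, (hlog _).2 rfl⟩, fun b hb => (hlog b).1 hb.2⟩, fun b _ hb => ?_⟩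
  obtain rfl := (hlog b).1 hb
  refine ⟨by simp [hNtr], ?_⟩
  rw [det_smul, det_eq_neg_one_of_mul_self_eq_one_of_trace_eq_zero hNN hNtr]
  simp only [Fintype.card_fin, mul_neg, mul_one, neg_lt_zero]
  positivity

/-- For a Lorentzian inner product `g(u,v) = uᵀGv` on `ℝ²` and a `g`-symmetric
matrix `A` with `det A = 1` and `tr A > 2`, there is exactly one `g`-symmetric matrix `a`
with `exp a = A`; moreover it satisfies `tr a = 0` and `det a < 0` (timelike geodesic). -/
theorem timelike_geodesic_unique (G A : Matrix (Fin 2) (Fin 2) ℝ)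
    (hGsymm : Gᵀ = G) (hGdet : G.det < 0)
    (hAsymm : Aᵀ * G = G * A) (hAdet : A.det = 1)
    (htr : 2 < A.trace) :
    (∃! a : Matrix (Fin 2) (Fin 2) ℝ, aᵀ * G = G * a ∧ NormedSpace.exp a = A) ∧
      ∀ a : Matrix (Fin 2) (Fin 2) ℝ, aᵀ * G = G * a → NormedSpace.exp a = A →
        a.trace = 0 ∧ a.det < 0 :=
  timelike_geodesic_unique_general G A hAsymm hAdet htr
end

section
/- Let G be a real symmetric 2×2 matrix with det G < 0, so that g(u,v) = uᵀGv is a Lorentzian inner product on ℝ², and let A be a real 2×2 matrix with AᵀG = GA and det A = 1. If tr A = 2 and A ≠ 1 (identity matrix), then there exists exactly one real 2×2 matrix a with aᵀG = Ga and exp(a) = A, namely a = A − 1; this a satisfies a ≠ 0, tr a = 0 and det a = 0 (so the unique geodesic t ↦ g(exp(ta)·,·) joining g and g(A·,·) is null). -/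
/-!
Put `N = A - 1`. Cayley–Hamilton with `tr A = 2`, `det A = 1` gives `N ^ 2 = 0`, so
`exp N = 1 + N = A`, and `N` is `g`-symmetric because `A` is. Conversely, any `a` with
`exp a = A` commutes with `N`, and the commutant of a non-scalar `2 × 2` matrix is spanned by `1`
and the matrix itself, so `a = α + β N` and `exp a = e^α (1 + β N)`. Comparing traces gives
`α = 0`, and then `β = 1` since `N ≠ 0`.
-/

open Matrix NormedSpace

theorem NormedSpace.exp_eq_one_add_of_sq_eq_zero {𝔸 : Type*} [Ring 𝔸] [Algebra ℚ 𝔸]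
    [TopologicalSpace 𝔸] [IsTopologicalRing 𝔸] {x : 𝔸} (hx : x ^ 2 = 0) :
    exp x = 1 + x := by
  rw [congrFun exp_eq_tsum_rat x, tsum_eq_sum (s := Finset.range 2)]
  · simp [Finset.sum_range_succ]
  · intro n hn
    rw [Finset.mem_range, not_lt] at hn
    rw [pow_eq_zero_of_le hn hx, smul_zero]

theorem Matrix.exp_scalar {m : Type*} [Fintype m] [DecidableEq m] (α : ℝ) :
    exp (scalar m α) = scalar m (Real.exp α) := by
  simp only [scalar_apply, exp_diagonal, Pi.exp_def, Real.exp_eq_exp_ℝ]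

theorem Matrix.exp_scalar_add_smul_of_sq_eq_zero {m : Type*} [Fintype m] [DecidableEq m]
    (α β : ℝ) {N : Matrix m m ℝ} (hN : N ^ 2 = 0) :
    exp (scalar m α + β • N) = Real.exp α • (1 + β • N) := by
  have hβN : (β • N) ^ 2 = 0 := by rw [smul_pow, hN, smul_zero]
  rw [exp_add_of_commute _ _ (scalar_commute α (Commute.all α) _), exp_scalar,
    exp_eq_one_add_of_sq_eq_zero hβN, scalar_apply, ← smul_one_eq_diagonal, smul_one_mul]

theorem Matrix.exists_eq_scalar_add_smul_of_commute {K : Type*} [Field K]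
    {m a : Matrix (Fin 2) (Fin 2) K} (hm : m ∉ Set.range (scalar (Fin 2))) (h : Commute m a) :
    ∃ α β : K, a = scalar (Fin 2) α + β • m := by
  have h_entry : ∀ i j, (m * a) i j = (a * m) i j := fun i j => congrFun (congrFun h i) j
  have h00 := h_entry 0 0
  have h01 := h_entry 0 1
  have h10 := h_entry 1 0
  simp only [mul_apply, Fin.sum_univ_two] at h00 h01 h10
  have of_coeff : ∀ β, a 0 1 = β * m 0 1 → a 1 0 = β * m 1 0 →
      a 0 0 - a 1 1 = β * (m 0 0 - m 1 1) →
      a = scalar (Fin 2) (a 0 0 - β * m 0 0) + β • m := by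
    intro β hβ01 hβ10 hβd
    ext i j
    fin_cases i <;> fin_cases j <;> simp <;> grind
  by_cases hm01 : m 0 1 = 0
  · by_cases hm10 : m 1 0 = 0
    · have hd : m 0 0 - m 1 1 ≠ 0 := by
        refine fun hd => hm ⟨m 0 0, ?_⟩
        ext i j
        fin_cases i <;> fin_cases j <;> simp [hm01, hm10, sub_eq_zero.mp hd]
      exact ⟨_, _, of_coeff ((a 0 0 - a 1 1) / (m 0 0 - m 1 1)) (by grind) (by grind)
        (by field_simp)⟩
    · exact ⟨_, _, of_coeff (a 1 0 / m 1 0) (by grind) (by field_simp) (by grind)⟩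
  · exact ⟨_, _, of_coeff (a 0 1 / m 0 1) (by field_simp) (by grind) (by grind)⟩

theorem Matrix.sq_sub_one_eq_zero_of_trace_eq_two_of_det_eq_one {K : Type*} [Field K]
    [NeZero (2 : K)] {A : Matrix (Fin 2) (Fin 2) K} (htr : A.trace = 2) (hdet : A.det = 1) :
    (A - 1) ^ 2 = 0 := by
  have h := sub_scalar_sq_eq_discr (m := A)
  rw [htr, discr_fin_two, htr, hdet, div_self two_ne_zero, map_one] at h
  rw [h]
  norm_num

theorem Matrix.eq_of_exp_eq_one_add {N a : Matrix (Fin 2) (Fin 2) ℝ} (hN2 : N ^ 2 = 0)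
    (hN : N ≠ 0) (ha : exp a = 1 + N) : a = N := by
  have hcomm : Commute N a := by
    rw [eq_sub_of_add_eq' ha.symm]
    exact (Commute.refl a).exp_left.sub_left (Commute.one_left a)
  have hNs : N ∉ Set.range (scalar (Fin 2)) := by
    rintro ⟨c, rfl⟩
    rw [← map_pow, ← map_zero (scalar (Fin 2)), scalar_inj, pow_eq_zero_iff two_ne_zero] at hN2
    exact hN (by rw [hN2, map_zero])
  obtain ⟨α, β, rfl⟩ := exists_eq_scalar_add_smul_of_commute hNs hcomm
  rw [exp_scalar_add_smul_of_sq_eq_zero α β hN2] at ha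
  have hNtr : N.trace = 0 := (isNilpotent_trace_of_isNilpotent ⟨2, hN2⟩).eq_zero
  have hα : α = 0 := by
    have htr := congrArg trace ha
    simp only [trace_smul, trace_add, trace_one, hNtr, mul_zero, add_zero, smul_eq_mul,
      Fintype.card_fin, Nat.cast_ofNat] at htr
    exact Real.exp_eq_one_iff α |>.mp (by linarith)
  subst hα
  rw [Real.exp_zero, one_smul, add_right_inj] at ha
  have hβ : β = 1 := smul_left_injective ℝ hN (ha.trans (one_smul ℝ N).symm)
  rw [hβ, map_zero, zero_add, one_smul]

theorem null_geodesic_unique_general (G A : Matrix (Fin 2) (Fin 2) ℝ)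
    (hAsymm : Aᵀ * G = G * A) (hAdet : A.det = 1)
    (htr : A.trace = 2) (hA : A ≠ 1) :
    (∀ a : Matrix (Fin 2) (Fin 2) ℝ, (aᵀ * G = G * a ∧ exp a = A) ↔ a = A - 1) ∧
      A - 1 ≠ 0 ∧ (A - 1).trace = 0 ∧ (A - 1).det = 0 := by
  have hN2 : (A - 1) ^ 2 = 0 :=
    sq_sub_one_eq_zero_of_trace_eq_two_of_det_eq_one htr hAdet
  have hN : A - 1 ≠ 0 := sub_ne_zero.mpr hA
  have hexp : exp (A - 1) = A := by rw [exp_eq_one_add_of_sq_eq_zero hN2, add_sub_cancel]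
  have hsymm : (A - 1)ᵀ * G = G * (A - 1) := by
    rw [transpose_sub, transpose_one, sub_mul, mul_sub, hAsymm, one_mul, mul_one]
  refine ⟨fun a => ⟨fun ⟨_, ha⟩ => ?_, fun ha => ha ▸ ⟨hsymm, hexp⟩⟩, hN,
    (isNilpotent_trace_of_isNilpotent ⟨2, hN2⟩).eq_zero,
    pow_eq_zero_iff two_ne_zero |>.mp (by rw [← det_pow, hN2, det_zero])⟩
  exact eq_of_exp_eq_one_add hN2 hN (by rw [ha, add_sub_cancel])

/-- For a Lorentzian inner product `g(u,v) = uᵀGv` on `ℝ²` and a `g`-symmetric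
matrix `A` with `det A = 1`, `tr A = 2` and `A ≠ 1`, the unique `g`-symmetric matrix `a` with
`exp a = A` is `a = A - 1`, which is nonzero, trace-free, and has `det a = 0` (null geodesic). -/
theorem null_geodesic_unique (G A : Matrix (Fin 2) (Fin 2) ℝ)
    (hGsymm : Gᵀ = G) (hGdet : G.det < 0)
    (hAsymm : Aᵀ * G = G * A) (hAdet : A.det = 1)
    (htr : A.trace = 2) (hA : A ≠ 1) :
    (∀ a : Matrix (Fin 2) (Fin 2) ℝ, (aᵀ * G = G * a ∧ exp a = A) ↔ a = A - 1) ∧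
      A - 1 ≠ 0 ∧ (A - 1).trace = 0 ∧ (A - 1).det = 0 :=
  null_geodesic_unique_general G A hAsymm hAdet htr hA
end

section
/- Let G be a real symmetric 2×2 matrix with det G < 0, so that g(u,v) = uᵀGv is a Lorentzian inner product on ℝ², and let A be a real 2×2 matrix with AᵀG = GA and det A = 1. If −2 < tr A < 2, then there exists exactly one real 2×2 matrix a with aᵀG = Ga, exp(a) = A and det a < π²; moreover this a satisfies tr a = 0 and 0 < det a < π² (so the geodesic t ↦ g(exp(ta)·,·) joining g and g(A·,·) is spacelike). -/
/-!
A trace-free `2 × 2` matrix satisfies `a ^ 2 = -det a • 1` (Cayley–Hamilton), so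
`exp a = cos θ • 1 + (sin θ / θ) • a` when `det a = θ ^ 2 > 0`, with `cosh`/`sinh` in place of
`cos`/`sin` when `det a < 0` and `exp a = 1 + a` when `det a = 0`; in particular
`det (exp a) = e ^ (tr a)`. Hence every logarithm `a` of `A` is trace-free, and `tr A < 2` rules out
`det a ≤ 0`, where `tr (exp a) = 2 cosh ≥ 2`. If moreover `θ = √(det a) < π`, comparing traces
gives `θ = arccos (tr A / 2)`, so `a = (θ / sin θ) • (A - cos θ • 1)` is determined by `A`.
Conversely this matrix is a logarithm of `A`, and being a polynomial in `A` it is `g`-symmetric.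
-/

open Matrix NormedSpace Real

namespace Matrix

variable {a : Matrix (Fin 2) (Fin 2) ℝ}

lemma sq_eq_neg_det_smul_one_of_trace_eq_zero (h : a.trace = 0) : a ^ 2 = (-a.det) • 1 := by
  rw [trace_fin_two] at h
  have h11 : a 1 1 = -a 0 0 := by linarith
  ext i j
  fin_cases i <;> fin_cases j <;>
    simp [sq, mul_apply, Fin.sum_univ_two, det_fin_two, h11] <;> ring

/-- `a ^ 2 = -det a • 1` splits the exponential series into a scalar even part and an odd part
proportional to `a`. -/
lemma exp_eq_smul_one_add_smul_of_trace_eq_zero (h : a.trace = 0) {F S : ℝ}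
    (hF : HasSum (fun k : ℕ => (-a.det) ^ k / (2 * k).factorial) F)
    (hS : HasSum (fun k : ℕ => (-a.det) ^ k / (2 * k + 1).factorial) S) :
    exp a = F • 1 + S • a := by
  have heven (k : ℕ) : a ^ (2 * k) = (-a.det) ^ k • 1 := by
    rw [pow_mul, sq_eq_neg_det_smul_one_of_trace_eq_zero h, smul_pow, one_pow]
  have hodd (k : ℕ) : a ^ (2 * k + 1) = (-a.det) ^ k • a := by
    rw [pow_succ, heven, smul_mul, one_mul]
  rw [exp_eq_tsum ℝ]
  refine HasSum.tsum_eq (HasSum.even_add_odd ?_ ?_)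
  · simpa only [heven, smul_smul, div_eq_inv_mul] using
      hF.smul_const (1 : Matrix (Fin 2) (Fin 2) ℝ)
  · simpa only [hodd, smul_smul, div_eq_inv_mul] using hS.smul_const a

lemma exp_eq_cos_smul_one_add_smul_of_trace_eq_zero (h : a.trace = 0) {θ : ℝ} (hθ : θ ≠ 0)
    (hdet : a.det = θ ^ 2) : exp a = cos θ • 1 + (sin θ / θ) • a := by
  refine exp_eq_smul_one_add_smul_of_trace_eq_zero h ?_ ?_
  · convert! hasSum_cos θ using 1
    funext k
    rw [hdet, neg_pow, ← pow_mul, mul_div_assoc]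
  · convert! (hasSum_sin θ).div_const θ using 1
    funext k
    rw [hdet, neg_pow, ← pow_mul, pow_succ]
    field_simp

lemma exp_eq_cosh_smul_one_add_smul_of_trace_eq_zero (h : a.trace = 0) {μ : ℝ} (hμ : μ ≠ 0)
    (hdet : a.det = -μ ^ 2) : exp a = cosh μ • 1 + (sinh μ / μ) • a := by
  refine exp_eq_smul_one_add_smul_of_trace_eq_zero h ?_ ?_
  · simpa only [hdet, neg_neg, ← pow_mul] using hasSum_cosh μ
  · convert! (hasSum_sinh μ).div_const μ using 1
    funext k
    rw [hdet, neg_neg, ← pow_mul, pow_succ]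
    field_simp

lemma exp_eq_one_add_of_trace_eq_zero_of_det_eq_zero (h : a.trace = 0) (hdet : a.det = 0) :
    exp a = 1 + a := by
  have hsum (n : ℕ → ℕ) (hn : n 0 ≤ 1) :
      HasSum (fun k : ℕ => (-a.det) ^ k / (n k).factorial) 1 := by
    convert hasSum_single 0 fun k hk => ?_ using 1
    · simp [Nat.factorial_eq_one.2 hn]
    · simp [hdet, zero_pow hk]
  simpa using exp_eq_smul_one_add_smul_of_trace_eq_zero h (hsum _ zero_le_one) (hsum _ le_rfl)

lemma det_smul_one_add_smul_of_trace_eq_zero (h : a.trace = 0) (F S : ℝ) :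
    (F • 1 + S • a).det = F ^ 2 + S ^ 2 * a.det := by
  rw [trace_fin_two] at h
  have h11 : a 1 1 = -a 0 0 := by linarith
  simp [det_fin_two, h11]
  ring

lemma trace_smul_one_add_smul_of_trace_eq_zero (h : a.trace = 0) (F S : ℝ) :
    (F • 1 + S • a).trace = 2 * F := by
  simp [trace_add, trace_smul, h, trace_one, mul_comm]

lemma det_exp_of_trace_eq_zero (h : a.trace = 0) : (exp a).det = 1 := by
  rcases lt_trichotomy a.det 0 with hneg | hzero | hpos
  · set μ := √(-a.det)
    have hμ : μ ^ 2 = -a.det := sq_sqrt (by linarith)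
    have hμ0 : μ ≠ 0 := (sqrt_pos.2 (by linarith)).ne'
    rw [exp_eq_cosh_smul_one_add_smul_of_trace_eq_zero h hμ0 (by linarith),
      det_smul_one_add_smul_of_trace_eq_zero h, show a.det = -μ ^ 2 by linarith, div_pow]
    field_simp
    linarith [cosh_sq_sub_sinh_sq μ]
  · rw [exp_eq_one_add_of_trace_eq_zero_of_det_eq_zero h hzero]
    simpa [hzero] using det_smul_one_add_smul_of_trace_eq_zero h 1 1
  · set θ := √a.det
    have hθ : θ ^ 2 = a.det := sq_sqrt hpos.le
    have hθ0 : θ ≠ 0 := (sqrt_pos.2 hpos).ne'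
    rw [exp_eq_cos_smul_one_add_smul_of_trace_eq_zero h hθ0 hθ.symm,
      det_smul_one_add_smul_of_trace_eq_zero h, ← hθ, div_pow]
    field_simp
    linarith [sin_sq_add_cos_sq θ]

lemma exp_smul_one {n : Type*} [Fintype n] [DecidableEq n] (c : ℝ) :
    exp (c • (1 : Matrix n n ℝ)) = Real.exp c • 1 := by
  rw [smul_one_eq_diagonal, exp_diagonal, smul_one_eq_diagonal, Real.exp_eq_exp_ℝ, Pi.exp_def]

lemma det_exp (a : Matrix (Fin 2) (Fin 2) ℝ) : (exp a).det = Real.exp a.trace := by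
  set a₀ := a - (a.trace / 2) • 1
  have h₀ : a₀.trace = 0 := by simp [a₀, trace_sub]
  have hcomm : Commute ((a.trace / 2) • 1) a₀ := (Commute.one_left _).smul_left _
  calc (exp a).det = (exp ((a.trace / 2) • (1 : Matrix (Fin 2) (Fin 2) ℝ) + a₀)).det := by
        rw [add_sub_cancel]
    _ = Real.exp (a.trace / 2) ^ 2 := by
      rw [exp_add_of_commute _ _ hcomm, det_mul, exp_smul_one, det_exp_of_trace_eq_zero h₀,
        det_smul]
      simp
    _ = Real.exp a.trace := by rw [← Real.exp_nat_mul]; ring_nf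

lemma two_le_trace_exp_of_det_nonpos (h : a.trace = 0) (hdet : a.det ≤ 0) :
    2 ≤ (exp a).trace := by
  rcases hdet.lt_or_eq with hneg | hzero
  · set μ := √(-a.det)
    have hμ0 : μ ≠ 0 := (sqrt_pos.2 (by linarith)).ne'
    rw [exp_eq_cosh_smul_one_add_smul_of_trace_eq_zero h hμ0 (by rw [sq_sqrt] <;> linarith),
      trace_smul_one_add_smul_of_trace_eq_zero h]
    linarith [one_le_cosh μ]
  · rw [exp_eq_one_add_of_trace_eq_zero_of_det_eq_zero h hzero]
    simp [h]

lemma trace_eq_zero_of_det_exp_eq_one (h : (exp a).det = 1) : a.trace = 0 := by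
  rwa [det_exp, Real.exp_eq_one_iff] at h

lemma det_pos_of_trace_exp_lt_two (h : a.trace = 0) (htr : (exp a).trace < 2) : 0 < a.det := by
  by_contra! hdet
  linarith [two_le_trace_exp_of_det_nonpos h hdet]

lemma det_sub_smul_one (A : Matrix (Fin 2) (Fin 2) ℝ) (c : ℝ) :
    (A - c • 1).det = A.det - c * A.trace + c ^ 2 := by
  simp [det_fin_two, trace_fin_two]
  ring

/-- For elliptic `A ∈ SL₂(ℝ)` (`|tr A| < 2`), the logarithm of `A` generating a rotation by
`θ = arccos (tr A / 2) ∈ (0, π)`. -/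
noncomputable def ellipticLog (A : Matrix (Fin 2) (Fin 2) ℝ) : Matrix (Fin 2) (Fin 2) ℝ :=
  (arccos (A.trace / 2) / sin (arccos (A.trace / 2))) • (A - (A.trace / 2) • 1)

lemma trace_ellipticLog (A : Matrix (Fin 2) (Fin 2) ℝ) : (ellipticLog A).trace = 0 := by
  simp [ellipticLog, trace_sub]

lemma eq_ellipticLog_exp (h : a.trace = 0) (hpos : 0 < a.det) (hlt : a.det < π ^ 2) :
    a = ellipticLog (exp a) := by
  set θ := √a.det
  have hθpos : 0 < θ := sqrt_pos.2 hpos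
  have hθlt : θ < π := (sqrt_lt' pi_pos).2 hlt
  have hexp := exp_eq_cos_smul_one_add_smul_of_trace_eq_zero h hθpos.ne' (sq_sqrt hpos.le).symm
  have hcos : (exp a).trace / 2 = cos θ := by
    rw [hexp, trace_smul_one_add_smul_of_trace_eq_zero h]
    ring
  have hsin : sin θ ≠ 0 := (sin_pos_of_pos_of_lt_pi hθpos hθlt).ne'
  rw [ellipticLog, hcos, arccos_cos hθpos.le hθlt.le, hexp, add_sub_cancel_left, smul_smul,
    div_mul_div_cancel₀ hsin, div_self hθpos.ne', one_smul]

lemma det_ellipticLog {A : Matrix (Fin 2) (Fin 2) ℝ} (hA : A.det = 1) (htr₁ : -2 < A.trace)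
    (htr₂ : A.trace < 2) : (ellipticLog A).det = arccos (A.trace / 2) ^ 2 := by
  have h : 1 - (A.trace / 2) ^ 2 ≠ 0 := by nlinarith
  rw [ellipticLog, det_smul, det_sub_smul_one, hA, Fintype.card_fin, div_pow, sin_arccos,
    sq_sqrt (by nlinarith), show 1 - A.trace / 2 * A.trace + (A.trace / 2) ^ 2 =
      1 - (A.trace / 2) ^ 2 by ring, div_mul_cancel₀ _ h]

lemma exp_ellipticLog {A : Matrix (Fin 2) (Fin 2) ℝ} (hA : A.det = 1) (htr₁ : -2 < A.trace)
    (htr₂ : A.trace < 2) : exp (ellipticLog A) = A := by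
  have hθ : 0 < arccos (A.trace / 2) := arccos_pos.2 (by linarith)
  have hsin : sin (arccos (A.trace / 2)) ≠ 0 :=
    (sin_pos_of_pos_of_lt_pi hθ (arccos_lt_pi.2 (by linarith))).ne'
  have hcoeff : sin (arccos (A.trace / 2)) / arccos (A.trace / 2) *
      (arccos (A.trace / 2) / sin (arccos (A.trace / 2))) = 1 := by
    field_simp
  rw [exp_eq_cos_smul_one_add_smul_of_trace_eq_zero (trace_ellipticLog A) hθ.ne'
    (det_ellipticLog hA htr₁ htr₂), cos_arccos (by linarith) (by linarith), ellipticLog, smul_smul,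
    hcoeff, one_smul, add_sub_cancel]

lemma ellipticLog_transpose_mul {G A : Matrix (Fin 2) (Fin 2) ℝ} (hA : Aᵀ * G = G * A) :
    (ellipticLog A)ᵀ * G = G * ellipticLog A := by
  simp only [ellipticLog, transpose_smul, transpose_sub, transpose_one, smul_mul,
    Matrix.mul_smul, sub_mul, mul_sub, hA, one_mul, mul_one]

end Matrix

theorem spacelike_geodesic_unique_general (G A : Matrix (Fin 2) (Fin 2) ℝ)
    (hAsymm : Aᵀ * G = G * A) (hAdet : A.det = 1)
    (htr₁ : -2 < A.trace) (htr₂ : A.trace < 2) :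
    (∃! a : Matrix (Fin 2) (Fin 2) ℝ,
        aᵀ * G = G * a ∧ exp a = A ∧ a.det < Real.pi ^ 2) ∧
      ∀ a : Matrix (Fin 2) (Fin 2) ℝ, aᵀ * G = G * a → exp a = A →
        a.det < Real.pi ^ 2 → a.trace = 0 ∧ 0 < a.det := by
  have hlog {a : Matrix (Fin 2) (Fin 2) ℝ} (hexp : exp a = A) : a.trace = 0 ∧ 0 < a.det := by
    have h₀ := trace_eq_zero_of_det_exp_eq_one (hexp ▸ hAdet)
    exact ⟨h₀, det_pos_of_trace_exp_lt_two h₀ (hexp ▸ htr₂)⟩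
  have hdet : (ellipticLog A).det < π ^ 2 := by
    rw [det_ellipticLog hAdet htr₁ htr₂]
    exact pow_lt_pow_left₀ (arccos_lt_pi.2 (by linarith)) (arccos_nonneg _) two_ne_zero
  refine ⟨⟨ellipticLog A,
    ⟨ellipticLog_transpose_mul hAsymm, exp_ellipticLog hAdet htr₁ htr₂, hdet⟩, ?_⟩,
    fun a _ hexp _ => hlog hexp⟩
  rintro a ⟨-, hexp, hlt⟩
  obtain ⟨h₀, hpos⟩ := hlog hexp
  rw [← hexp]
  exact eq_ellipticLog_exp h₀ hpos hlt

/-- For a Lorentzian inner product `g(u,v) = uᵀGv` on `ℝ²` and a `g`-symmetric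
matrix `A` with `det A = 1` and `-2 < tr A < 2`, there is exactly one `g`-symmetric matrix `a`
with `exp a = A` and `det a < π²`; moreover it satisfies `tr a = 0` and `0 < det a < π²`
(spacelike geodesic). -/
theorem spacelike_geodesic_unique (G A : Matrix (Fin 2) (Fin 2) ℝ)
    (hGsymm : Gᵀ = G) (hGdet : G.det < 0)
    (hAsymm : Aᵀ * G = G * A) (hAdet : A.det = 1)
    (htr₁ : -2 < A.trace) (htr₂ : A.trace < 2) :
    (∃! a : Matrix (Fin 2) (Fin 2) ℝ,
        aᵀ * G = G * a ∧ exp a = A ∧ a.det < Real.pi ^ 2) ∧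
      ∀ a : Matrix (Fin 2) (Fin 2) ℝ, aᵀ * G = G * a → exp a = A →
        a.det < Real.pi ^ 2 → a.trace = 0 ∧ 0 < a.det :=
  spacelike_geodesic_unique_general G A hAsymm hAdet htr₁ htr₂
end

section
/- Let G be a real symmetric 2×2 matrix with det G < 0, so that g(u,v) = uᵀGv is a Lorentzian inner product on ℝ², and let A be a real 2×2 matrix with AᵀG = GA and det A = 1. If tr A < −2, then there is no real 2×2 matrix a with aᵀG = Ga and exp(a) = A (no geodesic joins g and g(A·,·) in the space of Lorentzian inner products with fixed volume form). -/
/-!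
A real matrix exponential is a square, `exp a = exp (a / 2) ^ 2`, and it is invertible, so its
determinant is positive. For a `2 × 2` matrix `B`,
`tr (B ^ 2) = (tr B) ^ 2 - 2 det B ≥ -2 det B`; if `det (B ^ 2) = 1` and `det B > 0` then
`det B = 1`, so `tr (B ^ 2) ≥ -2`.
-/

open Matrix NormedSpace

theorem Matrix.trace_sq_fin_two {R : Type*} [CommRing R] (B : Matrix (Fin 2) (Fin 2) R) :
    (B ^ 2).trace = B.trace ^ 2 - 2 * B.det := by
  simp only [sq, trace_fin_two, det_fin_two, mul_apply, Fin.sum_univ_two]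
  ring

theorem Matrix.neg_two_le_trace_sq_of_det_sq_eq_one {R : Type*} [CommRing R] [LinearOrder R]
    [IsStrictOrderedRing R] {B : Matrix (Fin 2) (Fin 2) R} (hpos : 0 < B.det)
    (hdet : (B ^ 2).det = 1) : -2 ≤ (B ^ 2).trace := by
  rw [det_pow] at hdet
  have hB : B.det = 1 := by nlinarith
  rw [trace_sq_fin_two, hB]
  nlinarith [sq_nonneg B.trace]

theorem Matrix.exp_eq_exp_half_sq {n : Type*} [Fintype n] [DecidableEq n]
    (a : Matrix n n ℝ) : exp a = exp ((1 / 2 : ℝ) • a) ^ 2 := by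
  rw [← exp_nsmul, ← Nat.cast_smul_eq_nsmul ℝ, smul_smul]
  norm_num

theorem Matrix.det_exp_pos {n : Type*} [Fintype n] [DecidableEq n] (a : Matrix n n ℝ) :
    0 < (exp a).det := by
  have hne : (exp ((1 / 2 : ℝ) • a)).det ≠ 0 :=
    ((isUnit_iff_isUnit_det _).mp (Matrix.isUnit_exp ((1 / 2 : ℝ) • a))).ne_zero
  rw [exp_eq_exp_half_sq, det_pow]
  positivity

theorem Matrix.neg_two_le_trace_exp_of_det_exp_eq_one {a : Matrix (Fin 2) (Fin 2) ℝ}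
    (hdet : (exp a).det = 1) : -2 ≤ (exp a).trace := by
  rw [exp_eq_exp_half_sq] at hdet ⊢
  exact neg_two_le_trace_sq_of_det_sq_eq_one (det_exp_pos _) hdet

theorem no_geodesic_of_trace_lt_neg_two_general (G A : Matrix (Fin 2) (Fin 2) ℝ)
    (hAdet : A.det = 1)
    (htr : A.trace < -2) :
    ¬ ∃ a : Matrix (Fin 2) (Fin 2) ℝ, aᵀ * G = G * a ∧ exp a = A := by
  rintro ⟨a, -, rfl⟩
  exact htr.not_ge (neg_two_le_trace_exp_of_det_exp_eq_one hAdet)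

/-- For a Lorentzian inner product `g(u,v) = uᵀGv` on `ℝ²` and a `g`-symmetric
matrix `A` with `det A = 1` and `tr A < -2`, there is no `g`-symmetric matrix `a` with
`exp a = A` (no geodesic joins `g` and `g(A·,·)`). -/
theorem no_geodesic_of_trace_lt_neg_two (G A : Matrix (Fin 2) (Fin 2) ℝ)
    (hGsymm : Gᵀ = G) (hGdet : G.det < 0)
    (hAsymm : Aᵀ * G = G * A) (hAdet : A.det = 1)
    (htr : A.trace < -2) :
    ¬ ∃ a : Matrix (Fin 2) (Fin 2) ℝ, aᵀ * G = G * a ∧ exp a = A :=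
  no_geodesic_of_trace_lt_neg_two_general G A hAdet htr
end

section
/- Let G be a real symmetric 2×2 matrix with det G < 0, so that g(u,v) = uᵀGv is a Lorentzian inner product on ℝ², and let A be a real 2×2 matrix with AᵀG = GA and det A = 1. If tr A = −2 and A ≠ −1 (minus the identity matrix), then there is no real 2×2 matrix a with aᵀG = Ga and exp(a) = A (no geodesic joins g and g(A·,·) in the space of Lorentzian inner products with fixed volume form). -/
/-!
Every exponential is a square, `exp a = B * B` with `B = exp (a / 2)`, and by Cayley–Hamilton
`B * B = t • B - d • 1` with `t = tr B`, `d = det B`. Then `tr (B * B) = t² - 2d = -2` and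
`det (B * B) = d² = 1` force `d = 1` and `t = 0`, so `B * B = -1`.
-/

open Matrix NormedSpace

namespace Matrix

variable {R : Type*}

theorem mul_self_fin_two_s4 [CommRing R] (B : Matrix (Fin 2) (Fin 2) R) :
    B * B = B.trace • B - B.det • 1 := by
  nontriviality R
  have h := B.aeval_self_charpoly
  rw [charpoly_fin_two] at h
  rw [← sub_eq_zero, ← h]
  simp only [sq, map_add, Polynomial.aeval_sub, map_mul, Polynomial.aeval_X, Polynomial.aeval_C,
    Algebra.algebraMap_eq_smul_one, Algebra.smul_mul_assoc, one_mul]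
  abel

theorem mul_self_eq_neg_one_of_trace_eq_neg_two [CommRing R] [LinearOrder R]
    [IsStrictOrderedRing R] (B : Matrix (Fin 2) (Fin 2) R)
    (htr : (B * B).trace = -2) (hdet : (B * B).det = 1) : B * B = -1 := by
  have hsq := B.mul_self_fin_two_s4
  rw [hsq, trace_sub, trace_smul, trace_smul, trace_one, Fintype.card_fin, smul_eq_mul,
    smul_eq_mul, Nat.cast_ofNat] at htr
  rw [det_mul] at hdet
  have hdet1 : B.det = 1 := by nlinarith [sq_nonneg B.trace]
  have htr0 : B.trace = 0 := mul_self_eq_zero.mp (by linarith)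
  rw [hsq, htr0, hdet1]
  simp

end Matrix

theorem no_geodesic_of_trace_eq_neg_two_general (G A : Matrix (Fin 2) (Fin 2) ℝ)
    (hAdet : A.det = 1)
    (htr : A.trace = -2) (hA : A ≠ -1) :
    ¬ ∃ a : Matrix (Fin 2) (Fin 2) ℝ, aᵀ * G = G * a ∧ exp a = A := by
  rintro ⟨a, -, rfl⟩
  have hsquare : exp a = exp ((1 / 2 : ℝ) • a) * exp ((1 / 2 : ℝ) • a) := by
    rw [← Matrix.exp_add_of_commute _ _ (Commute.refl _), ← add_smul]
    norm_num
  rw [hsquare] at hAdet htr hA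
  exact hA (mul_self_eq_neg_one_of_trace_eq_neg_two _ htr hAdet)

/-- For a Lorentzian inner product `g(u,v) = uᵀGv` on `ℝ²` and a `g`-symmetric
matrix `A` with `det A = 1`, `tr A = -2` and `A ≠ -1`, there is no `g`-symmetric matrix `a`
with `exp a = A` (no geodesic joins `g` and `g(A·,·)`). -/
theorem no_geodesic_of_trace_eq_neg_two (G A : Matrix (Fin 2) (Fin 2) ℝ)
    (hGsymm : Gᵀ = G) (hGdet : G.det < 0)
    (hAsymm : Aᵀ * G = G * A) (hAdet : A.det = 1)
    (htr : A.trace = -2) (hA : A ≠ -1) :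
    ¬ ∃ a : Matrix (Fin 2) (Fin 2) ℝ, aᵀ * G = G * a ∧ exp a = A :=
  no_geodesic_of_trace_eq_neg_two_general G A hAdet htr hA
end

section
/- Let G be a real symmetric 2×2 matrix with det G < 0, so that g(u,v) = uᵀGv is a Lorentzian inner product on ℝ². Then: (a) for every real 2×2 matrix a with aᵀG = Ga, tr a = 0 and det a > 0 there exists t > 0 with exp(ta) = −1 (minus the identity matrix), so every spacelike geodesic emanating from g passes through −g; and (b) for every real 2×2 matrix a with aᵀG = Ga, tr a = 0 and det a ≤ 0, one has exp(ta) ≠ −1 for all real t, so every timelike or null geodesic emanating from g misses −g. -/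
open Matrix NormedSpace

/-!
A trace-free `2 × 2` matrix satisfies `a * a = -(det a) • 1` (Cayley–Hamilton). If `det a = ω² > 0`,
then `J = ω⁻¹ • a` squares to `-1`, so `z ↦ re z + (im z) • J` embeds `ℂ` in the matrix algebra
and carries `exp (π * I) = -1` to `exp ((π / ω) • a) = -1`. If `det a ≤ 0`, then `√(-det a)` is a
real eigenvalue of `a`, so the spectral mapping theorem puts a positive real number
`Real.exp (t * √(-det a))` in the spectrum of `exp (t • a)`, whereas the spectrum of `-1` is `{-1}`.
-/

namespace Matrix

variable {R : Type*} [CommRing R] {a : Matrix (Fin 2) (Fin 2) R}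

theorem mul_self_eq_neg_det_smul_one_of_trace_eq_zero (ha : a.trace = 0) :
    a * a = -a.det • 1 := by
  have h11 : a 1 1 = -a 0 0 := eq_neg_of_add_eq_zero_right (trace_fin_two a ▸ ha)
  ext i j
  fin_cases i <;> fin_cases j <;> simp [mul_apply, det_fin_two, h11] <;> ring

theorem mem_spectrum_of_sq_eq_neg_det [Nontrivial R] (ha : a.trace = 0) {c : R}
    (hc : c ^ 2 = -a.det) : c ∈ spectrum R a := by
  apply mem_spectrum_of_isRoot_charpoly
  simp [charpoly_fin_two, ha, hc]

end Matrix

namespace NormedSpace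

variable {A : Type*} [NormedRing A] [NormedAlgebra ℝ A]

theorem exp_pi_smul_eq_neg_one {J : A} (hJ : J * J = -1) : exp (Real.pi • J) = -1 := by
  let : NormedAlgebra ℚ A := .restrictScalars ℚ ℝ A
  let φ := Complex.liftAux J hJ
  have hφ : Continuous φ := φ.toLinearMap.continuous_of_finiteDimensional
  have hπ : φ (Real.pi * Complex.I) = Real.pi • J := by simp [φ, Complex.liftAux_apply]
  rw [← hπ, ← map_exp φ hφ, ← Complex.exp_eq_exp_ℂ, Complex.exp_pi_mul_I, map_neg, map_one]

theorem exp_ne_neg_one_of_mem_spectrum [CompleteSpace A] [Nontrivial A] {x : A} {c : ℝ}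
    (hc : c ∈ spectrum ℝ x) : exp x ≠ -1 := by
  intro h
  have hexp := spectrum.exp_mem_exp x hc
  rw [h, ← neg_one_smul ℝ (1 : A), ← Algebra.algebraMap_eq_smul_one, spectrum.scalar_eq, Set.mem_singleton_iff,
    ← Real.exp_eq_exp_ℝ] at hexp
  linarith [Real.exp_pos c]

end NormedSpace

attribute [local instance] Matrix.linftyOpNormedRing Matrix.linftyOpNormedAlgebra

theorem spacelike_hits_neg_timelike_null_miss_general (G : Matrix (Fin 2) (Fin 2) ℝ) :
    (∀ a : Matrix (Fin 2) (Fin 2) ℝ, aᵀ * G = G * a → a.trace = 0 → 0 < a.det →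
        ∃ t : ℝ, 0 < t ∧ exp (t • a) = -1) ∧
      (∀ a : Matrix (Fin 2) (Fin 2) ℝ, aᵀ * G = G * a → a.trace = 0 → a.det ≤ 0 →
        ∀ t : ℝ, exp (t • a) ≠ -1) := by
  refine ⟨fun a _ htr hdet => ?_, fun a _ htr hdet t => ?_⟩
  · obtain ⟨ω, hω, hωa⟩ : ∃ ω : ℝ, 0 < ω ∧ ω ^ 2 = a.det :=
      ⟨√a.det, Real.sqrt_pos.mpr hdet, Real.sq_sqrt hdet.le⟩
    have hJ : (ω⁻¹ • a) * (ω⁻¹ • a) = -1 := by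
      rw [smul_mul_smul_comm, mul_self_eq_neg_det_smul_one_of_trace_eq_zero htr, smul_smul,
        show ω⁻¹ * ω⁻¹ * -a.det = -1 by rw [← hωa]; field_simp, neg_one_smul]
    refine ⟨Real.pi / ω, by positivity, ?_⟩
    rw [← exp_pi_smul_eq_neg_one hJ, smul_smul, div_eq_mul_inv]
    -- the two `exp`s differ only in the topology: operator-norm versus product, equal by `rfl`
    rfl
  · have htr' : (t • a).trace = 0 := by rw [trace_smul, htr, smul_zero]
    have hdet' : (t • a).det ≤ 0 := by
      rw [det_smul, Fintype.card_fin]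
      exact mul_nonpos_of_nonneg_of_nonpos (by positivity) hdet
    exact exp_ne_neg_one_of_mem_spectrum
      (mem_spectrum_of_sq_eq_neg_det htr' (Real.sq_sqrt (neg_nonneg.mpr hdet')))

/-- For a Lorentzian inner product `g(u,v) = uᵀGv` on `ℝ²`:
(a) every `g`-symmetric trace-free `a` with `det a > 0` (spacelike direction) satisfies
`exp (t • a) = -1` for some `t > 0`, so every spacelike geodesic from `g` passes through `-g`;
(b) every `g`-symmetric trace-free `a` with `det a ≤ 0` (timelike or null direction) satisfies
`exp (t • a) ≠ -1` for all real `t`, so timelike and null geodesics from `g` miss `-g`. -/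
theorem spacelike_hits_neg_timelike_null_miss (G : Matrix (Fin 2) (Fin 2) ℝ)
    (hGsymm : Gᵀ = G) (hGdet : G.det < 0) :
    (∀ a : Matrix (Fin 2) (Fin 2) ℝ, aᵀ * G = G * a → a.trace = 0 → 0 < a.det →
        ∃ t : ℝ, 0 < t ∧ exp (t • a) = -1) ∧
      (∀ a : Matrix (Fin 2) (Fin 2) ℝ, aᵀ * G = G * a → a.trace = 0 → a.det ≤ 0 →
        ∀ t : ℝ, exp (t • a) ≠ -1) :=
  spacelike_hits_neg_timelike_null_miss_general G
end

section
/- Let x be a real square matrix (of any size) with x³ = 0 and let k > 0 be a real number. Then for every t ∈ ℝ, exp(t((log k)·1 + x − ½x²)) = k^t (1 + t·x + ½t(t−1)·x²). In particular, taking t = 1, k(1 + x) = exp((log k)·1 + x − ½x²), so the curve B_t := k^t(1 + tx + ½t(t−1)x²) satisfies B₀ = 1, B₁ = k(1+x) and is a one-parameter group of the stated exponential form. -/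
/-! With `n := x - ½x²` one has `n² = x²` and `n³ = 0`, so the exponential series of `t • n`
stops after its quadratic term: `exp (t • n) = 1 + t • x + ½ t (t - 1) • x²`. The scalar part
`(t log k) • 1` is central and contributes the factor `exp (t log k) = k ^ t`. -/

open Matrix NormedSpace

open Finset Nat in
theorem NormedSpace.exp_eq_sum_range_of_pow_eq_zero (𝕂 : Type*) {𝔸 : Type*} [Field 𝕂]
    [CharZero 𝕂] [Ring 𝔸] [Algebra 𝕂 𝔸] [TopologicalSpace 𝔸] [IsTopologicalRing 𝔸]
    {a : 𝔸} {n : ℕ} (h : a ^ n = 0) :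
    exp a = ∑ i ∈ range n, (i !⁻¹ : 𝕂) • a ^ i := by
  rw [exp_eq_tsum 𝕂]
  exact tsum_eq_sum fun i hi => by rw [pow_eq_zero_of_le (by simpa using hi) h, smul_zero]

section
variable {𝕂 𝔸 : Type*} [Field 𝕂] [Ring 𝔸] [Algebra 𝕂 𝔸]

theorem sq_sub_half_smul_sq {x : 𝔸} (hx : x ^ 3 = 0) :
    (x - (1 / 2 : 𝕂) • x ^ 2) ^ 2 = x ^ 2 := by
  have hx4 : x ^ 4 = 0 := pow_eq_zero_of_le (by norm_num) hx
  rw [sq, sub_mul, mul_sub, mul_sub, mul_smul_comm, smul_mul_assoc, smul_mul_smul_comm,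
    ← sq, ← pow_succ', ← pow_succ, ← pow_add]
  simp [hx, hx4]

theorem pow_three_sub_half_smul_sq {x : 𝔸} (hx : x ^ 3 = 0) :
    (x - (1 / 2 : 𝕂) • x ^ 2) ^ 3 = 0 := by
  have hx4 : x ^ 4 = 0 := pow_eq_zero_of_le (by norm_num) hx
  rw [pow_succ', sq_sub_half_smul_sq hx, sub_mul, smul_mul_assoc, ← pow_succ', ← pow_add, hx,
    hx4, smul_zero, sub_zero]

variable [CharZero 𝕂] [TopologicalSpace 𝔸] [IsTopologicalRing 𝔸]

theorem NormedSpace.exp_eq_of_pow_three_eq_zero {a : 𝔸} (h : a ^ 3 = 0) :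
    exp a = 1 + a + (2⁻¹ : 𝕂) • a ^ 2 := by
  simp [exp_eq_sum_range_of_pow_eq_zero 𝕂 h, Finset.sum_range_succ, add_assoc]

theorem NormedSpace.exp_smul_sub_half_smul_sq {x : 𝔸} (hx : x ^ 3 = 0) (t : 𝕂) :
    exp (t • (x - (1 / 2 : 𝕂) • x ^ 2)) = 1 + t • x + (t * (t - 1) / 2) • x ^ 2 := by
  have htn : (t • (x - (1 / 2 : 𝕂) • x ^ 2)) ^ 3 = 0 := by
    rw [smul_pow, pow_three_sub_half_smul_sq hx, smul_zero]
  rw [exp_eq_of_pow_three_eq_zero (𝕂 := 𝕂) htn, smul_pow, sq_sub_half_smul_sq hx]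
  module

end

section
variable {m : Type*} [Fintype m] [DecidableEq m]

theorem Matrix.exp_smul_one_s12 (a : ℝ) : exp (a • (1 : Matrix m m ℝ)) = Real.exp a • 1 := by
  rw [smul_one_eq_diagonal, exp_diagonal, Pi.exp_def, Real.exp_eq_exp_ℝ, smul_one_eq_diagonal]

theorem Matrix.exp_smul_one_add (a : ℝ) (y : Matrix m m ℝ) :
    exp (a • (1 : Matrix m m ℝ) + y) = Real.exp a • exp y := by
  rw [Matrix.exp_add_of_commute _ _ ((Commute.one_left y).smul_left a), exp_smul_one_s12,
    smul_one_mul]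

theorem Matrix.exp_smul_log_smul_one_add_sub_half_smul_sq {x : Matrix m m ℝ} (hx : x ^ 3 = 0)
    {k : ℝ} (hk : 0 < k) (t : ℝ) :
    exp (t • (Real.log k • (1 : Matrix m m ℝ) + x - (1 / 2 : ℝ) • x ^ 2)) =
      k ^ t • (1 + t • x + (t * (t - 1) / 2) • x ^ 2) := by
  have hsplit : t • (Real.log k • (1 : Matrix m m ℝ) + x - (1 / 2 : ℝ) • x ^ 2) =
      (t * Real.log k) • 1 + t • (x - (1 / 2 : ℝ) • x ^ 2) := by
    module
  rw [hsplit, exp_smul_one_add, exp_smul_sub_half_smul_sq hx, mul_comm,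
    ← Real.rpow_def_of_pos hk]

end

/-- If `x` is a real square matrix with `x³ = 0` and `k > 0`, then for all real
`t`, `exp(t((log k)·1 + x - ½x²)) = k^t (1 + t·x + ½t(t-1)·x²)`; in particular for `t = 1`,
`k(1 + x) = exp((log k)·1 + x - ½x²)`. -/
theorem exp_of_log_nilpotent {d : ℕ} (x : Matrix (Fin d) (Fin d) ℝ) (hx : x ^ 3 = 0)
    (k : ℝ) (hk : 0 < k) :
    (∀ t : ℝ,
      exp (t • (Real.log k • (1 : Matrix (Fin d) (Fin d) ℝ) + x - (1 / 2 : ℝ) • x ^ 2)) =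
        (k ^ t) • ((1 : Matrix (Fin d) (Fin d) ℝ) + t • x + (t * (t - 1) / 2) • x ^ 2)) ∧
    k • ((1 : Matrix (Fin d) (Fin d) ℝ) + x) =
      exp (Real.log k • (1 : Matrix (Fin d) (Fin d) ℝ) + x - (1 / 2 : ℝ) • x ^ 2) := by
  have hexp := exp_smul_log_smul_one_add_sub_half_smul_sq hx hk
  refine ⟨hexp, ?_⟩
  simpa using (hexp 1).symm
end

section
/- Let λ_1, …, λ_m be pairwise distinct nonzero real numbers and c_1, …, c_m positive real numbers. Let M be the m×m real matrix with entries M_{jk} = λ_j δ_{jk} − 2 λ_k c_k. Then the characteristic polynomial of M equals P(t) = ∏_{j=1}^m (t − λ_j) + 2 ∑_{j=1}^m λ_j c_j ∏_{k≠j} (t − λ_k), i.e. det(t·1 − M) = P(t) for all t; moreover P(λ_j) ≠ 0 for every j, so no λ_j is an eigenvalue of M. -/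
/-!
`t • 1 - M` is `diagonal (t - λ)` plus a matrix all of whose rows equal `(2 λ_k c_k)_k`.
Expanding the determinant multilinearly in the rows, terms using two copies of that common row
vanish, leaving `∏ (t - λ_j)` and one term per replaced row, which is the sum in `P`.
At `t = λ_j` only the `j`-th summand of `P` survives, and it is nonzero since the `λ_k` are
distinct.
-/

open Matrix Finset

namespace Matrix

variable {n R : Type*} [Fintype n] [DecidableEq n] [CommRing R]

theorem det_add_replicateRow (A : Matrix n n R) (v : n → R) :
    (A + replicateRow n v).det = A.det + ∑ j, (A.updateRow j v).det := by
  set g : Finset n → R := fun s => det (s.piecewise (fun _ => v) fun i => A i)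
  have hsplit : (A + replicateRow n v).det = ∑ s, g s := by
    rw [add_comm]
    exact (detRowAlternating : (n → R) [⋀^n]→ₗ[R] R).map_add_univ (fun _ => v) A
  -- two rows equal to `v` make the determinant vanish
  have hlarge : ∀ s ∉ insert ∅ (univ.map ⟨({·} : n → Finset n), singleton_injective⟩),
      g s = 0 := by
    intro s hs
    have hcard : 1 < #s := by
      obtain rfl | hne := s.eq_empty_or_nonempty
      · simp at hs
      by_contra! h
      obtain ⟨i, rfl⟩ := card_eq_one.mp (le_antisymm h hne.card_pos)
      simp at hs
    obtain ⟨i, hi, j, hj, hij⟩ := one_lt_card.mp hcard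
    have hrow : ∀ k ∈ s, s.piecewise (fun _ => v) (fun i => A i) k = v :=
      fun k hk => piecewise_eq_of_mem _ _ _ hk
    exact det_zero_of_row_eq hij ((hrow i hi).trans (hrow j hj).symm)
  rw [hsplit, ← sum_subset (subset_univ _) fun s _ hs => hlarge s hs,
    sum_insert (by simp), sum_map]
  simp only [g, piecewise_empty, Function.Embedding.coeFn_mk, Finset.piecewise_singleton]
  rfl

theorem det_updateRow_diagonal (a v : n → R) (j : n) :
    ((diagonal a).updateRow j v).det = v j * ∏ k ∈ univ.erase j, a k := by
  rw [← cramer_transpose_apply, diagonal_transpose, cramer_eq_adjugate_mulVec,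
    adjugate_diagonal, mulVec_diagonal, mul_comm]

theorem det_diagonal_add_replicateRow (a v : n → R) :
    (diagonal a + replicateRow n v).det = ∏ j, a j + ∑ j, v j * ∏ k ∈ univ.erase j, a k := by
  simp only [det_add_replicateRow, det_diagonal, det_updateRow_diagonal]

end Matrix

theorem Finset.sum_mul_prod_erase_sub_self {ι R : Type*} [Fintype ι] [DecidableEq ι]
    [CommRing R] (x w : ι → R) (j : ι) :
    ∑ i, w i * ∏ k ∈ univ.erase i, (x j - x k) = w j * ∏ k ∈ univ.erase j, (x j - x k) := by
  refine sum_eq_single j (fun i _ hij => ?_) (by simp)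
  rw [prod_eq_zero (mem_erase.mpr ⟨Ne.symm hij, mem_univ j⟩) (sub_self _), mul_zero]

theorem Finset.prod_erase_sub_ne_zero {ι R : Type*} [Fintype ι] [DecidableEq ι]
    [CommRing R] [IsDomain R] {x : ι → R} (hx : Function.Injective x) (j : ι) :
    ∏ k ∈ univ.erase j, (x j - x k) ≠ 0 :=
  prod_ne_zero_iff.mpr fun _ hk => sub_ne_zero.mpr (hx.ne (mem_erase.mp hk).1.symm)

/-- For pairwise distinct nonzero reals `λ_j` and positive reals `c_j`, the
matrix `M` with entries `M_{jk} = λ_j δ_{jk} - 2 λ_k c_k` has characteristic polynomial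
`P(t) = ∏_j (t - λ_j) + 2 ∑_j λ_j c_j ∏_{k≠j} (t - λ_k)`, and `P(λ_j) ≠ 0` for every `j`,
so no `λ_j` is an eigenvalue of `M`. -/
theorem char_poly_of_spectral_matrix {m : ℕ} (l : Fin m → ℝ)
    (hinj : Function.Injective l) (hne : ∀ j, l j ≠ 0)
    (c : Fin m → ℝ) (hc : ∀ j, 0 < c j) :
    let M : Matrix (Fin m) (Fin m) ℝ :=
      Matrix.of fun j k => (if j = k then l j else 0) - 2 * l k * c k
    let P : ℝ → ℝ := fun t =>
      (∏ j, (t - l j)) + 2 * ∑ j, l j * c j * ∏ k ∈ Finset.univ.erase j, (t - l k)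
    (∀ t : ℝ, (t • (1 : Matrix (Fin m) (Fin m) ℝ) - M).det = P t) ∧
      ∀ j, P (l j) ≠ 0 := by
  intro M P
  constructor
  · intro t
    have hM : t • (1 : Matrix (Fin m) (Fin m) ℝ) - M
        = diagonal (fun j => t - l j) + replicateRow (Fin m) (fun k => 2 * l k * c k) := by
      ext j k
      simp only [M, Matrix.sub_apply, Matrix.smul_apply, one_apply, of_apply, Matrix.add_apply,
        diagonal_apply, replicateRow_apply, smul_eq_mul]
      split_ifs <;> ring
    simp only [hM, det_diagonal_add_replicateRow, P, mul_sum, mul_assoc]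
  · intro j
    have hP : P (l j) = 2 * (l j * c j * ∏ k ∈ univ.erase j, (l j - l k)) := by
      simp only [P, prod_eq_zero (f := (l j - l ·)) (mem_univ j) (sub_self (l j)), zero_add,
        sum_mul_prod_erase_sub_self]
    rw [hP]
    exact mul_ne_zero two_ne_zero <|
      mul_ne_zero (mul_ne_zero (hne j) (hc j).ne') (prod_erase_sub_ne_zero hinj j)
end

section
/- Let λ_1, …, λ_m be pairwise distinct nonzero real numbers, c_1, …, c_m positive real numbers, M the m×m real matrix with entries M_{jk} = λ_j δ_{jk} − 2 λ_k c_k, and P(t) = ∏_{j=1}^m (t − λ_j) + 2 ∑_{j=1}^m λ_j c_j ∏_{k≠j} (t − λ_k). If μ is a real root of P, then μ ≠ λ_j for all j, the vector v_μ ∈ ℝ^m with components (v_μ)_j = 1/(μ − λ_j) satisfies M v_μ = μ v_μ, and the eigenspace of M for the eigenvalue μ is one-dimensional, spanned by v_μ. -/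
/-!
The matrix is a rank-one perturbation `M = diagonal λ - 1 aᵀ` of a diagonal matrix, with
`a k = 2 λ_k c_k`, and `P(μ) = det (μ - M)` is its secular equation
`1 + ∑ a_j / (μ - λ_j) = 0` with denominators cleared. At `μ = λ_j` only one term of `P`
survives, and it is nonzero, so a root avoids every `λ_j`. Away from the `λ_j`, the eigen-equation
`λ_j w_j - a ⬝ w = μ w_j` forces `w_j = -(a ⬝ w) / (μ - λ_j)`, so every eigenvector is a multiple
of `v_μ`, and the secular equation `a ⬝ v_μ = -1` says precisely that `v_μ` itself is one.
-/

open Matrix Finset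

section RankOnePerturbation

variable {K ι : Type*} [Field K] [Fintype ι] [DecidableEq ι]

def secular (d a : ι → K) (μ : K) : K :=
  ∏ j, (μ - d j) + ∑ j, a j * ∏ k ∈ univ.erase j, (μ - d k)

theorem secular_apply_self (d a : ι → K) (j : ι) :
    secular d a (d j) = a j * ∏ k ∈ univ.erase j, (d j - d k) := by
  have hprod : ∏ k, (d j - d k) = 0 := prod_eq_zero (mem_univ j) (sub_self _)
  have hsum : ∑ i, a i * ∏ k ∈ univ.erase i, (d j - d k) =
      a j * ∏ k ∈ univ.erase j, (d j - d k) := by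
    refine sum_eq_single j (fun i _ hij => ?_) (fun h => absurd (mem_univ j) h)
    rw [prod_eq_zero (mem_erase.mpr ⟨Ne.symm hij, mem_univ j⟩) (sub_self _), mul_zero]
  rw [secular, hprod, hsum, zero_add]

theorem ne_of_secular_eq_zero {d a : ι → K} {μ : K} (hd : Function.Injective d)
    (ha : ∀ j, a j ≠ 0) (hμ : secular d a μ = 0) (j : ι) : μ ≠ d j := by
  rintro rfl
  rw [secular_apply_self] at hμ
  refine mul_ne_zero (ha j) (prod_ne_zero_iff.mpr fun k hk => sub_ne_zero.mpr ?_) hμ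
  exact hd.ne (ne_of_mem_erase hk).symm

theorem secular_eq_prod_mul {d : ι → K} {μ : K} (a : ι → K) (hμ : ∀ j, μ ≠ d j) :
    secular d a μ = (∏ j, (μ - d j)) * (1 + a ⬝ᵥ fun j => (μ - d j)⁻¹) := by
  have herase (j : ι) : ∏ k ∈ univ.erase j, (μ - d k) = (∏ k, (μ - d k)) * (μ - d j)⁻¹ := by
    rw [← mul_prod_erase univ _ (mem_univ j), mul_comm (μ - d j),
      mul_inv_cancel_right₀ (sub_ne_zero.mpr (hμ j))]
  simp only [secular, dotProduct, herase, mul_add, mul_one, mul_sum]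
  congr 1
  exact sum_congr rfl fun j _ => by ring

theorem dotProduct_inv_sub_eq_neg_one {d a : ι → K} {μ : K} (hμ : ∀ j, μ ≠ d j)
    (h : secular d a μ = 0) : (a ⬝ᵥ fun j => (μ - d j)⁻¹) = -1 := by
  rw [secular_eq_prod_mul a hμ] at h
  have hprod : ∏ j, (μ - d j) ≠ 0 := prod_ne_zero_iff.mpr fun j _ => sub_ne_zero.mpr (hμ j)
  exact eq_neg_of_add_eq_zero_right ((mul_eq_zero.mp h).resolve_left hprod)

theorem diagonal_sub_vecMulVec_mulVec (d a w : ι → K) (j : ι) :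
    ((diagonal d - vecMulVec (fun _ => 1) a) *ᵥ w) j = d j * w j - a ⬝ᵥ w := by
  simp [sub_mulVec, mulVec_diagonal, vecMulVec_mulVec]

theorem diagonal_sub_vecMulVec_mulVec_eq_smul_iff {d : ι → K} {μ : K} (a : ι → K)
    (hμ : ∀ j, μ ≠ d j) (w : ι → K) :
    (diagonal d - vecMulVec (fun _ => 1) a) *ᵥ w = μ • w ↔
      w = -(a ⬝ᵥ w) • fun j => (μ - d j)⁻¹ := by
  simp only [funext_iff, diagonal_sub_vecMulVec_mulVec, Pi.smul_apply, smul_eq_mul]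
  refine forall_congr' fun j => ?_
  rw [← div_eq_mul_inv, eq_div_iff (sub_ne_zero.mpr (hμ j))]
  constructor <;> intro h <;> linear_combination -h

end RankOnePerturbation

/-- For pairwise distinct nonzero reals `λ_j`, positive reals `c_j`, the matrix
`M` with `M_{jk} = λ_j δ_{jk} - 2 λ_k c_k` and the polynomial
`P(t) = ∏_j (t - λ_j) + 2 ∑_j λ_j c_j ∏_{k≠j} (t - λ_k)`: if `μ` is a real root of `P`, then
`μ ≠ λ_j` for all `j`, the vector `v_μ` with components `1/(μ - λ_j)` is an eigenvector of `M`
for the eigenvalue `μ`, and the corresponding eigenspace is one-dimensional, spanned by `v_μ`. -/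
theorem eigenvector_of_root {m : ℕ} (l : Fin m → ℝ)
    (hinj : Function.Injective l) (hne : ∀ j, l j ≠ 0)
    (c : Fin m → ℝ) (hc : ∀ j, 0 < c j) (μ : ℝ) :
    let M : Matrix (Fin m) (Fin m) ℝ :=
      Matrix.of fun j k => (if j = k then l j else 0) - 2 * l k * c k
    let v : Fin m → ℝ := fun j => (μ - l j)⁻¹
    ((∏ j, (μ - l j)) + 2 * ∑ j, l j * c j * ∏ k ∈ Finset.univ.erase j, (μ - l k)) = 0 →
    (∀ j, μ ≠ l j) ∧
      M.mulVec v = μ • v ∧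
      v ≠ 0 ∧
      ∀ w : Fin m → ℝ, M.mulVec w = μ • w → ∃ s : ℝ, w = s • v := by
  intro M v hP
  set a : Fin m → ℝ := fun k => 2 * l k * c k
  have hM : M = diagonal l - vecMulVec (fun _ => 1) a := by
    ext j k
    by_cases hjk : j = k <;> simp [M, a, vecMulVec, diagonal, hjk]
  have hsec : secular l a μ = 0 := by
    rw [← hP, secular, mul_sum]
    exact congrArg _ (sum_congr rfl fun j _ => by ring)
  have ha (j : Fin m) : a j ≠ 0 := mul_ne_zero (mul_ne_zero two_ne_zero (hne j)) (hc j).ne'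
  have hμ := ne_of_secular_eq_zero hinj ha hsec
  have hav : a ⬝ᵥ v = -1 := dotProduct_inv_sub_eq_neg_one hμ hsec
  have heigen := diagonal_sub_vecMulVec_mulVec_eq_smul_iff a hμ
  rw [hM]
  refine ⟨hμ, ?_, fun hv => by simp [hv] at hav, fun w hw => ⟨-(a ⬝ᵥ w), (heigen w).mp hw⟩⟩
  rw [heigen, hav, neg_neg, one_smul]
end

section
/- Let λ_1, …, λ_m be pairwise distinct nonzero real numbers, c_1, …, c_m positive real numbers, P(t) = ∏_{j=1}^m (t − λ_j) + 2 ∑_{j=1}^m λ_j c_j ∏_{k≠j} (t − λ_k) and Q(t) = ∏_{j=1}^m (t − λ_j). If μ is a real root of P, then ∑_{j=1}^m λ_j c_j/(μ − λ_j)² = −P′(μ)/(2 Q(μ)). In particular, ∑_{j=1}^m λ_j c_j/(μ − λ_j)² = 0 (i.e. the eigenvector v_μ with components 1/(μ − λ_j) is a null vector for the form ⟨y,z⟩ = ∑_j λ_j c_j y_j z_j) if and only if μ is a multiple root of P. -/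
open Matrix Finset

/-!
Away from the nodes `λ_j`, `P = Q · F` with `F(t) = 1 + 2 ∑_j λ_j c_j / (t - λ_j)`.
A root `μ` of `P` is not a node (at `t = λ_j` only the `j`-th summand of `P` survives, and it
is nonzero), so `F(μ) = 0`, and the product rule gives
`P'(μ) = Q(μ) F'(μ) = -2 Q(μ) ∑_j λ_j c_j / (μ - λ_j)²` with `Q(μ) ≠ 0`.
-/

section Algebra

variable {R K ι : Type*} [DecidableEq ι]

theorem Finset.sum_mul_prod_erase_eq_prod_mul_sum_div [Field K] (s : Finset ι) (a f : ι → K)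
    (hf : ∀ i ∈ s, f i ≠ 0) :
    ∑ i ∈ s, a i * ∏ k ∈ s.erase i, f k = (∏ i ∈ s, f i) * ∑ i ∈ s, a i / f i := by
  rw [mul_sum]
  refine sum_congr rfl fun i hi => ?_
  rw [← mul_prod_erase s f hi]
  field_simp [hf i hi]

theorem Finset.sum_mul_prod_erase_sub_of_mem [CommRing R] (s : Finset ι) (a l : ι → R) {j : ι}
    (hj : j ∈ s) :
    ∑ i ∈ s, a i * ∏ k ∈ s.erase i, (l j - l k) = a j * ∏ k ∈ s.erase j, (l j - l k) := by
  refine sum_eq_single_of_mem j hj fun i _ hij => ?_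
  rw [prod_eq_zero (mem_erase.2 ⟨hij.symm, hj⟩) (sub_self _), mul_zero]

end Algebra

section SecularPolynomial

variable {R K ι : Type*} [Fintype ι]

def secularPoly [DecidableEq ι] [CommRing R] (l w : ι → R) (t : R) : R :=
  ∏ j, (t - l j) + ∑ j, w j * ∏ k ∈ univ.erase j, (t - l k)

theorem secularPoly_eq_prod_mul [DecidableEq ι] [Field K] (l w : ι → K) {t : K}
    (ht : ∀ j, t ≠ l j) :
    secularPoly l w t = (∏ j, (t - l j)) * (1 + ∑ j, w j / (t - l j)) := by
  rw [secularPoly, sum_mul_prod_erase_eq_prod_mul_sum_div _ _ _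
    fun j _ => sub_ne_zero.2 (ht j), mul_add, mul_one]

theorem secularPoly_apply_self [DecidableEq ι] [CommRing R] (l w : ι → R) (j : ι) :
    secularPoly l w (l j) = w j * ∏ k ∈ univ.erase j, (l j - l k) := by
  rw [secularPoly, prod_eq_zero (mem_univ j) (sub_self _), zero_add,
    sum_mul_prod_erase_sub_of_mem _ _ _ (mem_univ j)]

theorem ne_of_secularPoly_eq_zero [DecidableEq ι] [CommRing R] [IsDomain R] {l w : ι → R}
    (hl : Function.Injective l) (hw : ∀ j, w j ≠ 0) {μ : R} (hμ : secularPoly l w μ = 0)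
    (j : ι) : μ ≠ l j := by
  rintro rfl
  rw [secularPoly_apply_self] at hμ
  refine mul_ne_zero (hw j) (prod_ne_zero_iff.2 fun k hk => sub_ne_zero.2 ?_) hμ
  exact hl.ne (ne_of_mem_erase hk).symm

theorem hasDerivAt_one_add_sum_div_sub [NontriviallyNormedField K] (l w : ι → K) {μ : K}
    (hμ : ∀ j, μ ≠ l j) :
    HasDerivAt (fun t => 1 + ∑ j, w j / (t - l j)) (-∑ j, w j / (μ - l j) ^ 2) μ := by
  have hterm : ∀ j ∈ (univ : Finset ι),
      HasDerivAt (fun t => w j / (t - l j)) (-(w j / (μ - l j) ^ 2)) μ := fun j _ => by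
    simpa [div_eq_mul_inv, neg_div] using
      (((hasDerivAt_id μ).sub_const (l j)).inv (sub_ne_zero.2 (hμ j))).const_mul (w j)
  simpa [sum_neg_distrib] using (HasDerivAt.fun_sum hterm).const_add 1

theorem deriv_secularPoly_of_eq_zero [DecidableEq ι] [NontriviallyNormedField K] {l w : ι → K}
    (hl : Function.Injective l) (hw : ∀ j, w j ≠ 0) {μ : K} (hμ : secularPoly l w μ = 0) :
    deriv (secularPoly l w) μ = -(∏ j, (μ - l j)) * ∑ j, w j / (μ - l j) ^ 2 := by
  have hnode := ne_of_secularPoly_eq_zero hl hw hμ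
  have hQ : ∏ j, (μ - l j) ≠ 0 := prod_ne_zero_iff.2 fun j _ => sub_ne_zero.2 (hnode j)
  have hF : 1 + ∑ j, w j / (μ - l j) = 0 := by
    rw [secularPoly_eq_prod_mul l w hnode] at hμ
    exact (mul_eq_zero.1 hμ).resolve_left hQ
  have hfactor : secularPoly l w =ᶠ[nhds μ]
      fun t => (∏ j, (t - l j)) * (1 + ∑ j, w j / (t - l j)) := by
    filter_upwards [Filter.eventually_all.2 fun j => eventually_ne_nhds (hnode j)] with t ht
    exact secularPoly_eq_prod_mul l w ht
  have hQ' :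
      HasDerivAt (fun t => ∏ j, (t - l j)) (∑ i, ∏ k ∈ univ.erase i, (μ - l k)) μ := by
    simpa using HasDerivAt.fun_finsetProd (u := univ) (f := fun j t => t - l j)
      (f' := fun _ => 1) fun j _ => (hasDerivAt_id μ).sub_const (l j)
  rw [hfactor.deriv_eq, (hQ'.fun_mul (hasDerivAt_one_add_sum_div_sub l w hnode)).deriv, hF]
  ring

end SecularPolynomial

/-- For pairwise distinct nonzero reals `λ_j`, positive reals `c_j`,
`P(t) = ∏_j (t - λ_j) + 2 ∑_j λ_j c_j ∏_{k≠j} (t - λ_k)` and `Q(t) = ∏_j (t - λ_j)`: if `μ`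
is a real root of `P`, then `∑_j λ_j c_j/(μ - λ_j)² = -P′(μ)/(2 Q(μ))`; in particular this
sum vanishes (the eigenvector `v_μ` is null for the form `⟨y,z⟩ = ∑_j λ_j c_j y_j z_j`) if and
only if `μ` is a multiple root of `P`. -/
theorem null_eigenvector_iff_multiple_root {m : ℕ} (l : Fin m → ℝ)
    (hinj : Function.Injective l) (hne : ∀ j, l j ≠ 0)
    (c : Fin m → ℝ) (hc : ∀ j, 0 < c j) (μ : ℝ) :
    let P : ℝ → ℝ := fun t =>
      (∏ j, (t - l j)) + 2 * ∑ j, l j * c j * ∏ k ∈ Finset.univ.erase j, (t - l k)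
    let Q : ℝ → ℝ := fun t => ∏ j, (t - l j)
    P μ = 0 →
    ((∑ j, l j * c j / (μ - l j) ^ 2) = -(deriv P μ) / (2 * Q μ) ∧
      ((∑ j, l j * c j / (μ - l j) ^ 2) = 0 ↔ deriv P μ = 0)) := by
  intro P Q hP
  set w : Fin m → ℝ := fun j => 2 * (l j * c j)
  have hPw : P = secularPoly l w := by
    funext t
    simp only [P, w, secularPoly, mul_sum, mul_assoc]
  have hw : ∀ j, w j ≠ 0 := fun j => by simp [w, hne j, (hc j).ne']
  rw [hPw] at hP ⊢
  have hQ : Q μ ≠ 0 :=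
    prod_ne_zero_iff.2 fun j _ => sub_ne_zero.2 (ne_of_secularPoly_eq_zero hinj hw hP j)
  have hderiv : deriv (secularPoly l w) μ = -(2 * Q μ) * ∑ j, l j * c j / (μ - l j) ^ 2 := by
    rw [deriv_secularPoly_of_eq_zero hinj hw hP]
    simp only [Q, w, mul_div_assoc, ← mul_sum]
    ring
  rw [hderiv]
  refine ⟨by field_simp, ?_⟩
  simp [hQ]
end

section
/- Let λ_0 < 0 < λ_1 < … < λ_{m−1} be real numbers and c_0, …, c_{m−1} positive real numbers with ∑_{j=0}^{m−1} c_j = 1. Let P(t) = ∏_{j=0}^{m−1} (t − λ_j) + 2 ∑_{j=0}^{m−1} λ_j c_j ∏_{k≠j} (t − λ_k). Then (−1)^m P(λ_0) > 0, (−1)^m P(0) > 0, and (−1)^{m−j−1} P(λ_j) > 0 for each j = 1, …, m−1; consequently P has at least m−2 distinct positive real roots μ_1 < … < μ_{m−2} with λ_i < μ_i < λ_{i+1} for i = 1, …, m−2. -/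
/-!
At a node `λⱼ` every term of `P` vanishes except `2 λⱼ cⱼ ∏_{k ≠ j} (λⱼ - λₖ)`, and the product has
the sign `(-1)^(m-1-j)` of the number of nodes above `λⱼ`. At `0`, since
`λⱼ ∏_{k ≠ j} (-λₖ) = -∏ₖ (-λₖ)`, the sum collapses to `(1 - 2 ∑ cⱼ) ∏ₖ (-λₖ) = -∏ₖ (-λₖ)`, and
exactly one `λₖ` is negative. So `P` alternates in sign along the positive nodes, and the
intermediate value theorem puts a root in each gap `(λᵢ, λᵢ₊₁)`.
-/

open Finset

/-- The paper's `P`, with the nodes `λⱼ` written `l j`. -/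
def secularFun {ι R : Type*} [DecidableEq ι] [CommRing R] (s : Finset ι) (l c : ι → R) (t : R) :
    R :=
  ∏ k ∈ s, (t - l k) + 2 * ∑ j ∈ s, l j * c j * ∏ k ∈ s.erase j, (t - l k)

section Algebra

variable {ι R : Type*} [DecidableEq ι] [CommRing R] {s : Finset ι} {l c : ι → R}

theorem secularFun_apply_node {j : ι} (hj : j ∈ s) :
    secularFun s l c (l j) = 2 * (l j * c j * ∏ k ∈ s.erase j, (l j - l k)) := by
  have hprod : ∏ k ∈ s, (l j - l k) = 0 := prod_eq_zero hj (sub_self _)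
  have hsum : ∑ i ∈ s, l i * c i * ∏ k ∈ s.erase i, (l j - l k) =
      l j * c j * ∏ k ∈ s.erase j, (l j - l k) := by
    refine sum_eq_single_of_mem j hj fun i _ hij => ?_
    rw [prod_eq_zero (mem_erase.2 ⟨Ne.symm hij, hj⟩) (sub_self _), mul_zero]
  rw [secularFun, hprod, hsum, zero_add]

theorem secularFun_zero :
    secularFun s l c 0 = (1 - 2 * ∑ j ∈ s, c j) * ∏ k ∈ s, -l k := by
  have hterm : ∀ j ∈ s, l j * c j * ∏ k ∈ s.erase j, (0 - l k) = -(c j * ∏ k ∈ s, -l k) :=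
    fun j hj => by
      rw [← mul_prod_erase s (fun k => -l k) hj]
      simp only [zero_sub]
      ring
  rw [secularFun, sum_congr rfl hterm, sum_neg_distrib, ← sum_mul]
  simp only [zero_sub]
  ring

theorem neg_one_pow_card_mul_secularFun_zero (hsum : ∑ j ∈ s, c j = 1) :
    (-1) ^ #s * secularFun s l c 0 = -∏ k ∈ s, l k := by
  rw [secularFun_zero, hsum, prod_neg]
  rcases neg_one_pow_eq_or R #s with h | h <;> rw [h] <;> ring

theorem continuous_secularFun [TopologicalSpace R] [IsTopologicalRing R] :
    Continuous (secularFun s l c) := by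
  unfold secularFun
  fun_prop

end Algebra

section Sign

variable {ι R : Type*} [CommRing R] [LinearOrder R] [IsStrictOrderedRing R]

theorem neg_one_pow_card_mul_prod_pos {t : Finset ι} {f : ι → R} (hf : ∀ k ∈ t, f k < 0) :
    0 < (-1) ^ #t * ∏ k ∈ t, f k := by
  rw [← prod_neg]
  exact prod_pos fun k hk => neg_pos.2 (hf k hk)

theorem prod_neg_of_neg_of_forall_erase_pos {t : Finset ι} {f : ι → R} {i : ι} [DecidableEq ι]
    (hi : i ∈ t) (hfi : f i < 0) (hf : ∀ k ∈ t.erase i, 0 < f k) : ∏ k ∈ t, f k < 0 := by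
  rw [← mul_prod_erase t f hi]
  exact mul_neg_of_neg_of_pos hfi (prod_pos hf)

theorem mul_neg_of_neg_one_pow_succ_mul_pos {a b : R} {n : ℕ} (ha : 0 < (-1) ^ (n + 1) * a)
    (hb : 0 < (-1) ^ n * b) : a * b < 0 := by
  have := mul_pos ha hb
  rcases neg_one_pow_eq_or R n with h | h <;> rw [pow_succ, h] at this <;> linarith

theorem neg_one_pow_mul_prod_erase_sub_pos {m j : ℕ} {l : ℕ → R}
    (hl : StrictMonoOn l (Set.Iio m)) (hj : j < m) :
    0 < (-1) ^ (m - j - 1) * ∏ k ∈ (range m).erase j, (l j - l k) := by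
  have hsplit : (range m).erase j = range j ∪ Ico (j + 1) m := by
    ext k
    simp only [mem_erase, mem_union, mem_Ico, mem_range]
    omega
  have hdisj : Disjoint (range j) (Ico (j + 1) m) :=
    disjoint_left.2 fun k hk hk' => by simp only [mem_range, mem_Ico] at hk hk'; omega
  have hbelow : 0 < ∏ k ∈ range j, (l j - l k) :=
    prod_pos fun k hk => sub_pos.2 <| hl (lt_trans (mem_range.1 hk) hj) hj (mem_range.1 hk)
  have habove : 0 < (-1) ^ #(Ico (j + 1) m) * ∏ k ∈ Ico (j + 1) m, (l j - l k) :=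
    neg_one_pow_card_mul_prod_pos fun k hk => by
      obtain ⟨hjk, hkm⟩ := mem_Ico.1 hk
      exact sub_neg.2 (hl hj hkm hjk)
  rw [Nat.card_Ico, Nat.sub_add_eq] at habove
  rw [hsplit, prod_union hdisj, mul_left_comm]
  exact mul_pos hbelow habove

variable {m : ℕ} {l c : ℕ → R}

theorem neg_one_pow_mul_secularFun_node_pos (hl : StrictMonoOn l (Set.Iio m)) {j : ℕ}
    (hj : j < m) (hlj : 0 < l j) (hcj : 0 < c j) :
    0 < (-1) ^ (m - j - 1) * secularFun (range m) l c (l j) := by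
  rw [secularFun_apply_node (mem_range.2 hj)]
  convert mul_pos (mul_pos two_pos (mul_pos hlj hcj)) (neg_one_pow_mul_prod_erase_sub_pos hl hj)
    using 1
  ring

theorem neg_one_pow_mul_secularFun_first_node_pos (hl : StrictMonoOn l (Set.Iio m))
    (hm : 0 < m) (hl0 : l 0 < 0) (hc0 : 0 < c 0) :
    0 < (-1) ^ m * secularFun (range m) l c (l 0) := by
  have hQ := neg_one_pow_mul_prod_erase_sub_pos hl hm
  obtain ⟨n, rfl⟩ := Nat.exists_eq_add_one_of_ne_zero hm.ne'
  rw [secularFun_apply_node (mem_range.2 hm)]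
  rw [Nat.sub_zero, Nat.add_sub_cancel] at hQ
  convert mul_pos (mul_pos two_pos (mul_pos (neg_pos.2 hl0) hc0)) hQ using 1
  rw [pow_succ]
  ring

theorem secularFun_node_mul_node_succ_neg (hl : StrictMonoOn l (Set.Iio m)) {i : ℕ}
    (hi : i + 1 < m) (hli : 0 < l i) (hci : 0 < c i) (hli' : 0 < l (i + 1))
    (hci' : 0 < c (i + 1)) :
    secularFun (range m) l c (l i) * secularFun (range m) l c (l (i + 1)) < 0 := by
  refine mul_neg_of_neg_one_pow_succ_mul_pos (n := m - (i + 1) - 1) ?_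
    (neg_one_pow_mul_secularFun_node_pos hl hi hli' hci')
  rw [show m - (i + 1) - 1 + 1 = m - i - 1 by omega]
  exact neg_one_pow_mul_secularFun_node_pos hl (by omega) hli hci

end Sign

section Roots

variable {α δ : Type*} [ConditionallyCompleteLinearOrder α] [TopologicalSpace α] [OrderTopology α]
  [DenselyOrdered α] [Ring δ] [LinearOrder δ] [IsStrictOrderedRing δ] [TopologicalSpace δ]
  [OrderClosedTopology δ] {f : α → δ}

theorem exists_mem_Ioo_eq_zero_of_mul_neg {a b : α} (hab : a ≤ b)
    (hf : ContinuousOn f (Set.Icc a b)) (h : f a * f b < 0) : ∃ x ∈ Set.Ioo a b, f x = 0 := by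
  rcases mul_neg_iff.1 h with ⟨ha, hb⟩ | ⟨ha, hb⟩
  · exact intermediate_value_Ioo' hab hf ⟨hb, ha⟩
  · exact intermediate_value_Ioo hab hf ⟨ha, hb⟩

theorem exists_strictMonoOn_roots_interlacing (hf : Continuous f) {x : ℕ → α}
    {a b : ℕ} (hx : MonotoneOn x (Set.Icc a (b + 1)))
    (hsign : ∀ i ∈ Set.Icc a b, f (x i) * f (x (i + 1)) < 0) :
    ∃ μ : ℕ → α, StrictMonoOn μ (Set.Icc a b) ∧
      ∀ i ∈ Set.Icc a b, f (μ i) = 0 ∧ x i < μ i ∧ μ i < x (i + 1) := by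
  have hroot : ∀ i ∈ Set.Icc a b, ∃ y, f y = 0 ∧ x i < y ∧ y < x (i + 1) := by
    rintro i ⟨hai, hib⟩
    have hle : x i ≤ x (i + 1) :=
      hx ⟨hai, by omega⟩ ⟨by omega, by omega⟩ (Nat.le_succ i)
    obtain ⟨y, ⟨hiy, hyi⟩, hy⟩ :=
      exists_mem_Ioo_eq_zero_of_mul_neg hle hf.continuousOn (hsign i ⟨hai, hib⟩)
    exact ⟨y, hy, hiy, hyi⟩
  choose! μ hμ using hroot
  refine ⟨μ, ?_, hμ⟩
  rintro i ⟨hai, hib⟩ j ⟨haj, hjb⟩ hij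
  calc μ i < x (i + 1) := (hμ i ⟨hai, hib⟩).2.2
    _ ≤ x j := hx ⟨by omega, by omega⟩ ⟨haj, by omega⟩ hij
    _ < μ j := (hμ j ⟨haj, hjb⟩).2.1

end Roots

/-- For `λ_0 < 0 < λ_1 < … < λ_{m-1}` and positive `c_j` with `∑ c_j = 1`, the
polynomial `P(t) = ∏_j (t - λ_j) + 2 ∑_j λ_j c_j ∏_{k≠j} (t - λ_k)` satisfies
`(-1)^m P(λ_0) > 0`, `(-1)^m P(0) > 0`, `(-1)^{m-j-1} P(λ_j) > 0` for `j = 1, …, m-1`;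
consequently `P` has at least `m-2` distinct positive real roots `μ_1 < … < μ_{m-2}` with
`λ_i < μ_i < λ_{i+1}` for `i = 1, …, m-2`. -/
theorem roots_interlace_with_negative (m : ℕ) (hm : 2 ≤ m) (l : ℕ → ℝ)
    (hneg : l 0 < 0) (hpos : 0 < l 1) (hmono : ∀ i j, i < j → j < m → l i < l j)
    (c : ℕ → ℝ) (hc : ∀ j, j < m → 0 < c j)
    (hsum : ∑ j ∈ Finset.range m, c j = 1) :
    let P : ℝ → ℝ := fun t =>
      (∏ j ∈ Finset.range m, (t - l j)) +
        2 * ∑ j ∈ Finset.range m, l j * c j * ∏ k ∈ (Finset.range m).erase j, (t - l k)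
    (0 < (-1 : ℝ) ^ m * P (l 0)) ∧
    (0 < (-1 : ℝ) ^ m * P 0) ∧
    (∀ j, 1 ≤ j → j < m → 0 < (-1 : ℝ) ^ (m - j - 1) * P (l j)) ∧
    ∃ μ : ℕ → ℝ,
      (∀ i j, 1 ≤ i → i < j → j ≤ m - 2 → μ i < μ j) ∧
      (∀ i, 1 ≤ i → i ≤ m - 2 → P (μ i) = 0 ∧ 0 < μ i ∧ l i < μ i ∧ μ i < l (i + 1)) := by
  intro P
  have hl : StrictMonoOn l (Set.Iio m) := fun i _ j hj hij => hmono i j hij hj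
  have hlpos : ∀ j, 1 ≤ j → j < m → 0 < l j := fun j hj hjm =>
    hpos.trans_le (hl.monotoneOn (show 1 < m by omega) hjm hj)
  have hzero : (-1 : ℝ) ^ m * P 0 = -∏ k ∈ range m, l k := by
    rw [← neg_one_pow_card_mul_secularFun_zero (l := l) hsum, card_range]
    rfl
  have hsign : ∀ i ∈ Set.Icc 1 (m - 2), P (l i) * P (l (i + 1)) < 0 := fun i ⟨hi1, hi2⟩ =>
    secularFun_node_mul_node_succ_neg hl (by omega) (hlpos i hi1 (by omega)) (hc i (by omega))
      (hlpos (i + 1) (by omega) (by omega)) (hc (i + 1) (by omega))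
  obtain ⟨μ, hμ, hroots⟩ := exists_strictMonoOn_roots_interlacing continuous_secularFun
    (hl.monotoneOn.mono fun i hi => show i < m by grind) hsign
  refine ⟨neg_one_pow_mul_secularFun_first_node_pos hl (by omega) hneg (hc 0 (by omega)),
    hzero ▸ neg_pos.2 (prod_neg_of_neg_of_forall_erase_pos (mem_range.2 (by omega)) hneg
      fun k hk => hlpos k (by grind) (by grind)),
    fun j hj hjm => neg_one_pow_mul_secularFun_node_pos hl hjm (hlpos j hj hjm) (hc j hjm),
    μ, fun i j hi hij hj => hμ ⟨hi, by omega⟩ ⟨by omega, hj⟩ hij, fun i hi1 hi2 => ?_⟩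
  obtain ⟨hroot, hlow, hhigh⟩ := hroots i ⟨hi1, hi2⟩
  exact ⟨hroot, (hlpos i hi1 (by omega)).trans hlow, hlow, hhigh⟩
end
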